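/- arXiv:1101.3088 — 2 statements merged into one kernel-verified Lean document; each statement's English description precedes it below -/
import Mathlib

section
/- Let N be an admissible algebra, π an admissible projection, and S = S_π = {x ∈ N : π(exp₁ x) = 0}. If a ∈ N satisfies S + a = S, then a = 0. (Equivalently, S is invariant under no non-trivial translation.) -/
/-- `pw F N k` is the characteristic ideal `N^k`. -/
def pw (F N : Type*) [Field F] [NonUnitalNonAssocRing N] [Module F N] : ℕ → Submodule F N
  | 0 => ⊤
  | 1 => ⊤
  | (k+2) => Submodule.span F {z : N | ∃ x : N, ∃ y ∈ pw F N (k+1), z = x * y}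

/-- The annihilator `Ann(N) = {x | x·N = 0}` of a commutative algebra `N`. -/
def annSub (F N : Type*) [Field F] [NonUnitalCommRing N] [Module F N]
    [SMulCommClass F N N] [IsScalarTower F N N] : Submodule F N where
  carrier := {x | ∀ y : N, x * y = 0}
  add_mem' := by intro a b ha hb y; simp [add_mul, ha y, hb y]
  zero_mem' := by intro y; simp
  smul_mem' := by intro c x hx y; rw [smul_mul_assoc, hx y, smul_zero]

/-- `npw x k = x^(k+1)` in a non-unital ring. -/
def npw {N : Type*} [Mul N] (x : N) : ℕ → N
  | 0 => x
  | (k+1) => x * npw x k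

/-- The truncated exponential `exp₁ x = Σ_{k=1}^{m} x^k/k!`. -/
noncomputable def exp1 (F : Type*) {N : Type*} [Field F] [NonUnitalNonAssocRing N]
    [Module F N] (m : ℕ) (x : N) : N :=
  ∑ k ∈ Finset.range m, ((Nat.factorial (k + 1) : F))⁻¹ • npw x k


/-!
Because `N` is nilpotent, `exp₁` is `exp - 1` on the unitization of `N`, so
`exp₁ (x + y) = exp₁ x + exp₁ y + exp₁ x * exp₁ y`, and successive approximation shows that
`exp₁` is onto. Put `b = exp₁ a`. Translation invariance at `0` gives `π b = 0`; at `x` with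
`exp₁ x = y ∈ ker π` it gives `π (y * b) = 0`, and since `π w ∈ Ann(N)` this extends to
`π (w * b) = 0` for every `w`. Hence the ideal generated by `b` lies in `ker π`, which meets
`Ann(N) = range π` only in `0`. A nonzero ideal of a nilpotent algebra always meets the
annihilator, so `b = 0`, and `exp₁ a = 0` forces `a = 0`.
-/

section Powers

variable {F N : Type*} [Field F] [NonUnitalNonAssocRing N] [Module F N]

theorem mul_mem_pw_succ (x : N) {m : ℕ} {y : N} (hy : y ∈ pw F N m) :
    x * y ∈ pw F N (m + 1) := by
  cases m with
  | zero => exact Submodule.mem_top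
  | succ m => exact Submodule.subset_span ⟨x, y, hy, rfl⟩

theorem pw_succ_le : ∀ k : ℕ, pw F N (k + 1) ≤ pw F N k
  | 0 => le_top
  | k + 1 => Submodule.span_le.2 <| by
      rintro _ ⟨x, y, hy, rfl⟩
      exact mul_mem_pw_succ x (pw_succ_le k hy)

theorem pw_antitone : Antitone (pw F N) :=
  antitone_nat_of_succ_le pw_succ_le

theorem mul_mem_pw (x : N) {m : ℕ} {y : N} (hy : y ∈ pw F N m) : x * y ∈ pw F N m :=
  pw_succ_le m (mul_mem_pw_succ x hy)

theorem eq_zero_of_pw_one_eq_bot (h : pw F N 1 = ⊥) (x : N) : x = 0 :=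
  (Submodule.mem_bot F).1 (h ▸ Submodule.mem_top)

theorem npw_mem_pw (x : N) : ∀ k : ℕ, npw x k ∈ pw F N (k + 1)
  | 0 => Submodule.mem_top
  | k + 1 => mul_mem_pw_succ x (npw_mem_pw x k)

theorem npw_mem_pw_of_mem {m : ℕ} {x : N} (hx : x ∈ pw F N m) : ∀ k : ℕ, npw x k ∈ pw F N m
  | 0 => hx
  | k + 1 => mul_mem_pw x (npw_mem_pw_of_mem hx k)

theorem npw_eq_zero_of_pw_eq_bot {ν : ℕ} (hnil : pw F N (ν + 1) = ⊥) (x : N) : npw x ν = 0 :=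
  (Submodule.mem_bot F).1 (hnil ▸ npw_mem_pw x ν)

end Powers

section Exp

variable {F N : Type*} [Field F] [NonUnitalNonAssocRing N] [Module F N]

theorem exp1_zero (ν : ℕ) : exp1 F ν (0 : N) = 0 :=
  Finset.sum_eq_zero fun k _ => by cases k <;> simp [npw]

theorem exp1_succ (n : ℕ) (x : N) :
    exp1 F (n + 1) x = x + ∑ k ∈ Finset.range n, ((k + 2).factorial : F)⁻¹ • npw x (k + 1) := by
  rw [exp1, Finset.sum_range_succ', add_comm]
  simp [npw]

theorem exp1_mem_pw (ν : ℕ) {m : ℕ} {x : N} (hx : x ∈ pw F N m) : exp1 F ν x ∈ pw F N m :=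
  Submodule.sum_mem _ fun k _ => Submodule.smul_mem _ _ (npw_mem_pw_of_mem hx k)

theorem exp1_sub_self_mem_pw {ν m : ℕ} (hν : ν ≠ 0) {x : N} (hx : x ∈ pw F N m) :
    exp1 F ν x - x ∈ pw F N (m + 1) := by
  obtain ⟨n, rfl⟩ := Nat.exists_eq_succ_of_ne_zero hν
  rw [exp1_succ, add_sub_cancel_left]
  exact Submodule.sum_mem _ fun k _ =>
    Submodule.smul_mem _ _ (mul_mem_pw_succ x (npw_mem_pw_of_mem hx k))

theorem eq_zero_of_exp1_eq_zero {ν : ℕ} (hnil : pw F N (ν + 1) = ⊥) {a : N}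
    (ha : exp1 F ν a = 0) : a = 0 := by
  rcases Nat.eq_zero_or_pos ν with rfl | hν
  · exact eq_zero_of_pw_one_eq_bot hnil a
  have hmem : ∀ m : ℕ, a ∈ pw F N m := by
    intro m
    induction m with
    | zero => exact Submodule.mem_top
    | succ m ih => simpa [ha] using exp1_sub_self_mem_pw hν.ne' ih
  simpa [hnil] using hmem (ν + 1)

end Exp

section Unitization

variable {F N : Type*} [Field F] [NonUnitalRing N] [Module F N]
  [SMulCommClass F N N] [IsScalarTower F N N]

theorem inr_npw (x : N) :
    ∀ k : ℕ, ((npw x k : N) : Unitization F N) = (x : Unitization F N) ^ (k + 1)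
  | 0 => by simp [npw]
  | k + 1 => by rw [npw, Unitization.inr_mul, inr_npw x k, ← pow_succ']

theorem inr_exp1 (ν : ℕ) (x : N) :
    ((exp1 F ν x : N) : Unitization F N) =
      ∑ k ∈ Finset.range ν, ((k + 1).factorial : F)⁻¹ • (x : Unitization F N) ^ (k + 1) := by
  rw [exp1, ← Unitization.inrHom_apply F F N, map_sum]
  simp only [map_smul, Unitization.inrHom_apply, inr_npw]

end Unitization

theorem exp1_add {F N : Type*} [Field F] [CharZero F] [NonUnitalCommRing N] [Module F N]
    [SMulCommClass F N N] [IsScalarTower F N N] {ν : ℕ} (hnil : pw F N (ν + 1) = ⊥) (x y : N) :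
    exp1 F ν (x + y) = exp1 F ν x + exp1 F ν y + exp1 F ν x * exp1 F ν y := by
  -- `IsNilpotent.exp` needs a `ℚ`-module structure; take the one coming from `F`.
  let _ : Module ℚ (Unitization F N) := Module.compHom _ (algebraMap ℚ F)
  have hpow (z : N) : (z : Unitization F N) ^ (ν + 1) = 0 := by
    rw [← inr_npw, npw_eq_zero_of_pw_eq_bot hnil, Unitization.inr_zero]
  have hexp (z : N) : IsNilpotent.exp (z : Unitization F N) = 1 + exp1 F ν z := by
    rw [IsNilpotent.exp_eq_sum (hpow z), Finset.sum_range_succ', inr_exp1, add_comm]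
    simp only [pow_zero, Nat.factorial_zero, Nat.cast_one, inv_one, one_smul]
    congr 1
    refine Finset.sum_congr rfl fun k _ => ?_
    change algebraMap ℚ F _ • (z : Unitization F N) ^ (k + 1) = _
    rw [map_inv₀, map_natCast]
  apply Unitization.inr_injective (R := F)
  have h := IsNilpotent.exp_add_of_commute (Commute.all (x : Unitization F N) y)
    ⟨_, hpow x⟩ ⟨_, hpow y⟩
  rw [← Unitization.inr_add, hexp, hexp, hexp] at h
  push_cast
  linear_combination h

theorem exp1_surjective {F N : Type*} [Field F] [CharZero F] [NonUnitalCommRing N] [Module F N]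
    [SMulCommClass F N N] [IsScalarTower F N N] {ν : ℕ} (hnil : pw F N (ν + 1) = ⊥) :
    Function.Surjective (exp1 F (N := N) ν) := by
  intro y
  rcases Nat.eq_zero_or_pos ν with rfl | hν
  · exact ⟨0, (eq_zero_of_pw_one_eq_bot hnil _).trans (eq_zero_of_pw_one_eq_bot hnil y).symm⟩
  -- Correcting `x` by the defect `y - exp1 x` gains one power of `N`.
  have approx : ∀ k : ℕ, ∃ x : N, y - exp1 F ν x ∈ pw F N (k + 1) := by
    intro k
    induction k with
    | zero => exact ⟨0, Submodule.mem_top⟩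
    | succ k ih =>
      obtain ⟨x, hx⟩ := ih
      refine ⟨x + (y - exp1 F ν x), ?_⟩
      have hdefect : y - exp1 F ν (x + (y - exp1 F ν x)) =
          -(exp1 F ν (y - exp1 F ν x) - (y - exp1 F ν x)) -
            exp1 F ν x * exp1 F ν (y - exp1 F ν x) := by
        rw [exp1_add hnil]
        abel
      rw [hdefect]
      exact sub_mem (neg_mem (exp1_sub_self_mem_pw hν.ne' hx))
        (mul_mem_pw_succ _ (exp1_mem_pw ν hx))
  obtain ⟨x, hx⟩ := approx ν
  rw [hnil, Submodule.mem_bot, sub_eq_zero] at hx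
  exact ⟨x, hx.symm⟩

theorem eq_zero_of_mul_mem_of_disjoint_annSub {F N : Type*} [Field F] [NonUnitalCommRing N]
    [Module F N] [SMulCommClass F N N] [IsScalarTower F N N] {ν : ℕ}
    (hnil : pw F N (ν + 1) = ⊥) {K : Submodule F N} (hK : Disjoint K (annSub F N)) {b : N}
    (hb : b ∈ K) (hmul : ∀ w : N, w * b ∈ K) : b = 0 := by
  suffices h : ∀ k : ℕ, ∀ y ∈ K, (∀ w : N, w * y ∈ K) → y ∈ pw F N (ν + 1 - k) → y = 0 from
    h (ν + 1) b hb hmul (by rw [Nat.sub_self]; exact Submodule.mem_top)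
  intro k
  induction k with
  | zero =>
    intro y _ _ hy
    rwa [Nat.sub_zero, hnil, Submodule.mem_bot] at hy
  | succ k ih =>
    intro y hyK hyMul hy
    have hann : y ∈ annSub F N := fun w => by
      rw [mul_comm]
      refine ih _ (hyMul w) (fun w' => ?_) (pw_antitone (by omega) (mul_mem_pw_succ w hy))
      rw [← mul_assoc]
      exact hyMul _
    exact Submodule.disjoint_def.1 hK y hyK hann

theorem stmt9_general {F N : Type*} [Field F] [CharZero F] [NonUnitalCommRing N] [Module F N]
    [SMulCommClass F N N] [IsScalarTower F N N]
    (ν : ℕ) (hnil : pw F N (ν + 1) = ⊥)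
    (π : N →ₗ[F] N) (hproj : π ∘ₗ π = π) (hrange : LinearMap.range π = annSub F N)
    (a : N) (ha : ∀ x : N, π (exp1 F ν x) = 0 ↔ π (exp1 F ν (x + a)) = 0) :
    a = 0 := by
  set b := exp1 F ν a
  have hb : π b = 0 := by simpa [exp1_zero] using (ha 0).1 (by simp [exp1_zero])
  have hker_mul : ∀ y : N, π y = 0 → π (y * b) = 0 := by
    intro y hy
    obtain ⟨x, rfl⟩ := exp1_surjective hnil y
    have h := (ha x).1 hy
    rwa [exp1_add hnil, map_add, map_add, hy, hb, zero_add, zero_add] at h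
  have hmul : ∀ w : N, π (w * b) = 0 := by
    intro w
    have hπw : π w * b = 0 := (hrange ▸ LinearMap.mem_range_self π w : π w ∈ annSub F N) b
    calc π (w * b) = π ((w - π w) * b) := by rw [sub_mul, hπw, sub_zero]
      _ = 0 := hker_mul _ (by rw [map_sub, ← LinearMap.comp_apply, hproj, sub_self])
  have hdisj : Disjoint (LinearMap.ker π) (annSub F N) :=
    hrange ▸ (LinearMap.IsIdempotentElem.isCompl hproj).disjoint.symm
  exact eq_zero_of_exp1_eq_zero hnil (eq_zero_of_mul_mem_of_disjoint_annSub hnil hdisj hb hmul)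

/-- Let `N` be an admissible algebra (finite-dimensional commutative nilpotent,
`dim Ann(N) = 1`), `π` an admissible projection and `S = S_π = {x | π(exp₁ x) = 0}`.  If
`a ∈ N` satisfies `S + a = S` then `a = 0`. -/
theorem stmt9 {F N : Type*} [Field F] [CharZero F] [NonUnitalCommRing N] [Module F N]
    [SMulCommClass F N N] [IsScalarTower F N N] [FiniteDimensional F N]
    (hAnn : Module.finrank F (annSub F N) = 1)
    (ν : ℕ) (hnil : pw F N (ν + 1) = ⊥)
    (π : N →ₗ[F] N) (hproj : π ∘ₗ π = π) (hrange : LinearMap.range π = annSub F N)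
    (a : N) (ha : ∀ x : N, π (exp1 F ν x) = 0 ↔ π (exp1 F ν (x + a)) = 0) :
    a = 0 :=
  stmt9_general ν hnil π hproj hrange a ha
end

section
/- Every admissible algebra N over a field F of characteristic zero with nil-index ν(N) ≤ 3 admits a grading, i.e. a vector space decomposition N = ⊕_{k∈ℤ⁺} N_k with N_j N_k ⊆ N_{j+k} for all j,k > 0. -/
/-! Pick a functional `Λ` not vanishing on the line `Ann(N)`, so that `N = ker Λ ⊕ Ann(N)`.
Since `N` is nilpotent, every nonzero ideal of `N` meets `Ann(N)`; hence the form
`B x y = Λ (x * y)` is nondegenerate on `ker Λ`. As `N⁴ = 0`, the trace `Q` of `N² + Ann(N)` on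
`ker Λ` is totally isotropic. Choose a complement `X` of `Q` in `Q^⊥`, and, after twisting by `Q`
(this uses `2 ≠ 0`), a totally isotropic complement `V` of `Q^⊥` orthogonal to `X`. Then
`N = V ⊕ X ⊕ Q ⊕ Ann(N)` is graded in degrees `2, 3, 4, 6`: `V · V ⊆ Q`, `X · X ⊆ Ann(N)`,
`V · Q ⊆ N³ ⊆ Ann(N)`, and all other products of pieces vanish. -/

open Submodule LinearMap

section Grading

variable {R N ι : Type*} [Ring R] [NonUnitalNonAssocRing N] [Module R N]

theorem mul_mem_iSup_fiber {H : ι → Submodule R N} {deg : ι → ℕ}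
    (hmul : ∀ a b, ∀ x ∈ H a, ∀ y ∈ H b, x * y ∈ ⨆ c, ⨆ (_ : deg c = deg a + deg b), H c)
    {j k : ℕ} {x y : N} (hx : x ∈ ⨆ a, ⨆ (_ : deg a = j), H a)
    (hy : y ∈ ⨆ b, ⨆ (_ : deg b = k), H b) :
    x * y ∈ ⨆ c, ⨆ (_ : deg c = j + k), H c := by
  rw [iSup_subtype'] at hx hy
  refine iSup_induction _ (motive := (· * y ∈ _)) hx (fun a x hx ↦ ?_) (by simp)
    fun x x' hx hx' ↦ by simpa [add_mul] using add_mem hx hx'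
  refine iSup_induction _ (motive := (x * · ∈ _)) hy (fun b y hy ↦ ?_) (by simp)
    fun y y' hy hy' ↦ by simpa [mul_add] using add_mem hy hy'
  exact a.2 ▸ b.2 ▸ hmul a b x hx y hy

theorem exists_grading_of_iSupIndep (H : ι → Submodule R N) (deg : ι → ℕ)
    (hdeg : ∀ i, 0 < deg i) (hind : iSupIndep H) (htop : iSup H = ⊤)
    (hmul : ∀ a b, ∀ x ∈ H a, ∀ y ∈ H b, x * y ∈ ⨆ c, ⨆ (_ : deg c = deg a + deg b), H c) :
    ∃ G : ℕ → Submodule R N, G 0 = ⊥ ∧ iSup G = ⊤ ∧ iSupIndep G ∧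
      ∀ j k : ℕ, 0 < j → 0 < k → ∀ x ∈ G j, ∀ y ∈ G k, x * y ∈ G (j + k) := by
  refine ⟨fun k ↦ ⨆ i, ⨆ (_ : deg i = k), H i, ?_, ?_, ?_,
    fun j k _ _ x hx y hy ↦ mul_mem_iSup_fiber hmul hx hy⟩
  · exact iSup_eq_bot.2 fun i ↦ iSup_eq_bot.2 fun h ↦ absurd h (hdeg i).ne'
  · rw [iSup_comm, ← htop]
    exact iSup_congr fun i ↦ iSup_iSup_eq_right
  · intro k
    refine (hind.disjoint_biSup_biSup (s := deg ⁻¹' {k}) (t := (deg ⁻¹' {k})ᶜ)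
      disjoint_compl_right).mono_right ?_
    refine iSup₂_le fun l hl ↦ iSup₂_le fun i hi ↦ ?_
    exact le_iSup₂_of_le (f := fun i _ ↦ H i) i (by simpa [hi] using hl) le_rfl

end Grading

section Decomposition

theorem iSupIndep_vecCons_four {α : Type*} [CompleteLattice α] [IsModularLattice α]
    {a b c d : α} (hbc : Disjoint b c) (ha : Disjoint a (b ⊔ c))
    (hd : Disjoint (a ⊔ b ⊔ c) d) : iSupIndep ![a, b, c, d] := by
  classical
  rw [iSupIndep_iff_supIndep_univ,
    show (Finset.univ : Finset (Fin 4)) = insert 3 (insert 0 {1, 2}) by decide]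
  refine .insert (.insert ((Finset.supIndep_pair (by decide)).2 hbc) ?_) ?_
  · simpa using ha
  · simpa [sup_assoc] using hd.symm

variable {R M : Type*} [Ring R] [AddCommGroup M] [Module R M] {K A : Submodule R M}
  {U₁ U₂ U₃ : Submodule R K}

theorem iSupIndep_map_subtype_of_isCompl (hKA : IsCompl K A) (h₂₃ : Disjoint U₂ U₃)
    (h₁ : Disjoint U₁ (U₂ ⊔ U₃)) :
    iSupIndep ![U₁.map K.subtype, U₂.map K.subtype, U₃.map K.subtype, A] := by
  refine iSupIndep_vecCons_four (disjoint_map K.injective_subtype h₂₃) ?_ ?_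
  · rw [← Submodule.map_sup]
    exact disjoint_map K.injective_subtype h₁
  · rw [← Submodule.map_sup, ← Submodule.map_sup]
    exact hKA.disjoint.mono_left (map_subtype_le _ _)

theorem iSup_map_subtype_of_isCompl (hKA : IsCompl K A) (htop : U₁ ⊔ U₂ ⊔ U₃ = ⊤) :
    ⨆ i, ![U₁.map K.subtype, U₂.map K.subtype, U₃.map K.subtype, A] i = ⊤ := by
  set H := ![U₁.map K.subtype, U₂.map K.subtype, U₃.map K.subtype, A]
  have hK : K = H 0 ⊔ H 1 ⊔ H 2 := by
    simp only [H, Matrix.cons_val, ← Submodule.map_sup, htop, Submodule.map_top, range_subtype]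
  rw [eq_top_iff, ← hKA.sup_eq_top, hK]
  exact sup_le (sup_le (sup_le (le_iSup H 0) (le_iSup H 1)) (le_iSup H 2)) (le_iSup H 3)

end Decomposition

theorem exists_isCompl_ker_of_finrank_eq_one {K V : Type*} [Field K] [AddCommGroup V]
    [Module K V] [FiniteDimensional K V] {W : Submodule K V} (hW : Module.finrank K W = 1) :
    ∃ Λ : Module.Dual K V, IsCompl (ker Λ) W := by
  obtain ⟨e, he, hspan⟩ := finrank_eq_one_iff'.1 hW
  obtain ⟨Λ, hΛ⟩ : ∃ Λ : Module.Dual K V, Λ e ≠ 0 := by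
    by_contra! h
    exact he (Subtype.ext ((Module.forall_dual_apply_eq_zero_iff K (e : V)).1 h))
  refine ⟨Λ, Module.Dual.isCompl_ker_of_disjoint_of_ne_bot (fun h ↦ hΛ (by simp [h]))
    (disjoint_def.2 fun x hx hxW ↦ ?_)
    ((Submodule.ne_bot_iff W).2 ⟨e, e.2, fun h ↦ he (Subtype.ext h)⟩)⟩
  obtain ⟨c, hc⟩ := hspan ⟨x, hxW⟩
  have hcx : c • (e : V) = x := congrArg Subtype.val hc
  have hc0 : c * Λ e = 0 := by rwa [← smul_eq_mul, ← map_smul, hcx]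
  rw [← hcx, (mul_eq_zero.1 hc0).resolve_right hΛ, zero_smul]

namespace LinearMap.BilinForm

variable {K M : Type*} [Field K] [AddCommGroup M] [Module K M] {B : LinearMap.BilinForm K M}

theorem IsRefl.le_orthogonal_comm (hB : B.IsRefl) {S S' : Submodule K M}
    (h : S ≤ B.orthogonal S') : S' ≤ B.orthogonal S :=
  fun x hx _ hy ↦ hB _ _ (h hy x hx)

variable [FiniteDimensional K M]

theorem IsSymm.exists_isotropic_sup_eq_of_disjoint_orthogonal [NeZero (2 : K)] (hB : B.IsSymm)
    {Q V₀ : Submodule K M} (hQ : Q ≤ B.orthogonal Q) (hV₀ : Disjoint V₀ (B.orthogonal Q)) :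
    ∃ V, V ≤ B.orthogonal V ∧ V ⊔ Q = V₀ ⊔ Q ∧ Disjoint V (B.orthogonal Q) := by
  have hsurj : Function.Surjective (B.domRestrict₁₂ V₀ Q).flip := by
    rw [← flip_injective_iff₁, LinearMap.flip_flip, ← ker_eq_bot, eq_bot_iff]
    intro v hv
    have hvQ : (v : M) ∈ B.orthogonal Q := fun q hq ↦ by
      rw [hB.eq]; exact LinearMap.congr_fun hv ⟨q, hq⟩
    exact (Submodule.mem_bot K).2 (Subtype.ext ((disjoint_def.1 hV₀) v v.2 hvQ))
  obtain ⟨w, hw⟩ := Module.projective_lifting_property _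
    (-(2⁻¹ : K) • B.domRestrict₁₂ V₀ V₀) hsurj
  have hw' (v v' : V₀) : B v' (w v) = -2⁻¹ * B v v' := by
    simpa [domRestrict₁₂_apply] using LinearMap.congr_fun (LinearMap.congr_fun hw v) v'
  let φ : V₀ →ₗ[K] M := V₀.subtype + Q.subtype ∘ₗ w
  have hφ (v : V₀) : φ v = v + w v := rfl
  refine ⟨range φ, ?_, ?_, ?_⟩
  · -- the two cross terms each contribute `-B v v' / 2`, and `Q` is isotropic
    rintro _ ⟨v, rfl⟩ _ ⟨v', rfl⟩
    have hww : B (w v') (w v) = 0 := hQ (w v).2 _ (w v').2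
    rw [hφ, hφ, map_add, map_add, LinearMap.add_apply, LinearMap.add_apply, hww, hw',
      hB.eq (w v' : M), hw', hB.eq (v : M)]
    field_simp
    ring
  · refine le_antisymm (sup_le ?_ le_sup_right) (sup_le (fun v hv ↦ ?_) le_sup_right)
    · rintro _ ⟨v, rfl⟩
      exact add_mem_sup v.2 (w v).2
    · refine mem_sup.2 ⟨φ ⟨v, hv⟩, mem_range_self _ _, -(w ⟨v, hv⟩ : M), neg_mem (w _).2, ?_⟩
      simp [hφ]
  · refine disjoint_def.2 ?_
    rintro _ ⟨v, rfl⟩ hv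
    have hvQ : (v : M) ∈ B.orthogonal Q := by
      simpa [hφ] using sub_mem hv (hQ (w v).2)
    obtain rfl : v = 0 := Subtype.ext ((disjoint_def.1 hV₀) v v.2 hvQ)
    exact map_zero φ

theorem IsSymm.exists_isotropic_decomposition [NeZero (2 : K)] (hB : B.IsSymm)
    (hnd : B.Nondegenerate) {Q : Submodule K M} (hQ : Q ≤ B.orthogonal Q) :
    ∃ V X : Submodule K M, V ≤ B.orthogonal V ∧ V ≤ B.orthogonal X ∧ X ≤ B.orthogonal Q ∧
      Disjoint X Q ∧ Disjoint V (X ⊔ Q) ∧ V ⊔ X ⊔ Q = ⊤ := by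
  obtain ⟨X, hQX, hQXT⟩ := IsModularLattice.exists_disjoint_and_sup_eq hQ
  have hXT : X ≤ B.orthogonal Q := hQXT ▸ le_sup_right
  have hQY : Q ≤ B.orthogonal X := hB.isRefl.le_orthogonal_comm hXT
  have hXY : IsCompl X (B.orthogonal X) := by
    refine (isCompl_orthogonal_iff_disjoint hB.isRefl).2 (disjoint_def.2 fun x hx hxX ↦ ?_)
    have hxT : x ∈ B.orthogonal (B.orthogonal Q) := by
      rw [← hQXT]
      intro n hn
      obtain ⟨q, hq, y, hy, rfl⟩ := mem_sup.1 hn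
      rw [map_add, LinearMap.add_apply, hXT hx q hq, hxX y hy, add_zero]
    rw [orthogonal_orthogonal hnd hB.isRefl] at hxT
    exact disjoint_def.1 hQX x hxT hx
  obtain ⟨V₀, hQV₀, hQV₀Y⟩ := IsModularLattice.exists_disjoint_and_sup_eq hQY
  have hV₀T : Disjoint V₀ (B.orthogonal Q) := by
    have hTY : B.orthogonal Q ⊓ B.orthogonal X = Q := by
      rw [← hQXT, sup_inf_assoc_of_le _ hQY, hXY.inf_eq_bot, sup_bot_eq]
    refine disjoint_def.2 fun v hv hvT ↦ disjoint_def.1 hQV₀ v ?_ hv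
    exact hTY ▸ ⟨hvT, hQV₀Y ▸ mem_sup_right hv⟩
  obtain ⟨V, hVV, hVQ, hVT⟩ := hB.exists_isotropic_sup_eq_of_disjoint_orthogonal hQ hV₀T
  rw [sup_comm V₀, hQV₀Y] at hVQ
  refine ⟨V, X, hVV, hVQ ▸ le_sup_left, hXT, hQX.symm, by rwa [sup_comm, hQXT], ?_⟩
  rw [sup_right_comm, hVQ, sup_comm, hXY.sup_eq_top]

end LinearMap.BilinForm

section Powers

variable {F N : Type*} [Field F] [NonUnitalNonAssocRing N] [Module F N]

theorem mul_mem_pw_s16 (a : N) {b : N} {k : ℕ} (hb : b ∈ pw F N (k + 1)) :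
    a * b ∈ pw F N (k + 2) :=
  subset_span ⟨a, b, hb, rfl⟩

end Powers

section Annihilator

variable {F N : Type*} [Field F] [NonUnitalCommRing N] [Module F N] [SMulCommClass F N N]
  [IsScalarTower F N N]

theorem eq_bot_of_disjoint_annSub {n : ℕ} (hn : pw F N (n + 1) = ⊥) {I : Submodule F N}
    (hI : ∀ x ∈ I, ∀ y, x * y ∈ I) (hIA : Disjoint I (annSub F N)) : I = ⊥ := by
  suffices ∀ m k, k + m = n → ∀ x ∈ I, x ∈ pw F N (k + 1) → x = 0 from
    eq_bot_iff.2 fun x hx ↦ (mem_bot F).2 (this n 0 (zero_add n) x hx mem_top)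
  intro m
  induction m with
  | zero =>
    rintro k rfl x - hx
    simpa [hn] using hx
  | succ m ih =>
    refine fun k hk x hxI hx ↦ disjoint_def.1 hIA x hxI fun y ↦ ?_
    exact ih (k + 1) (by omega) _ (hI x hxI y) (mul_comm y x ▸ mul_mem_pw_s16 y hx)

variable (h4 : pw F N 4 = ⊥)
include h4

theorem pw_three_le_annSub : pw F N 3 ≤ annSub F N := fun u hu y ↦ by
  simpa [mul_comm, h4] using mul_mem_pw_s16 (F := F) y hu

theorem mul_eq_zero_of_mem_pw_two {x y : N} (hx : x ∈ pw F N 2) (hy : y ∈ pw F N 2) :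
    x * y = 0 := by
  suffices pw F N 2 ≤ ker (LinearMap.mul F N x) from this hy
  refine span_le.2 ?_
  rintro _ ⟨a, b, -, rfl⟩
  rw [SetLike.mem_coe, mem_ker, mul_apply', ← mul_assoc, mul_comm x a]
  exact pw_three_le_annSub h4 (mul_mem_pw_s16 a hx) b

theorem mul_mem_annSub_of_mem_sup (x : N) {u : N} (hu : u ∈ pw F N 2 ⊔ annSub F N) :
    x * u ∈ annSub F N := by
  obtain ⟨p, hp, a, ha, rfl⟩ := mem_sup.1 hu
  rw [mul_add, mul_comm x a, ha x, add_zero]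
  exact pw_three_le_annSub h4 (mul_mem_pw_s16 x hp)

theorem mul_eq_zero_of_mem_sup {x y : N} (hx : x ∈ pw F N 2 ⊔ annSub F N)
    (hy : y ∈ pw F N 2 ⊔ annSub F N) : x * y = 0 := by
  obtain ⟨p, hp, a, ha, rfl⟩ := mem_sup.1 hx
  obtain ⟨q, hq, b, hb, rfl⟩ := mem_sup.1 hy
  rw [add_mul, ha, mul_add, mul_comm p b, hb, mul_eq_zero_of_mem_pw_two h4 hp hq]
  simp

end Annihilator

section Frobenius

variable {F N : Type*} [Field F] [NonUnitalCommRing N] [Module F N] [SMulCommClass F N N]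
  [IsScalarTower F N N]

def mulForm (Λ : Module.Dual F N) : LinearMap.BilinForm F N := (LinearMap.mul F N).compr₂ Λ

@[simp]
theorem mulForm_apply (Λ : Module.Dual F N) (x y : N) : mulForm Λ x y = Λ (x * y) := rfl

theorem mulForm_isSymm (Λ : Module.Dual F N) : (mulForm Λ).IsSymm :=
  ⟨fun x y ↦ by simp [mul_comm]⟩

theorem annSub_le_ker_mulForm (Λ : Module.Dual F N) : annSub F N ≤ ker (mulForm Λ) :=
  fun x hx ↦ LinearMap.ext fun y ↦ by simp [hx y]

theorem isCompl_ker_ker_mulForm {n : ℕ} (hn : pw F N (n + 1) = ⊥) {Λ : Module.Dual F N}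
    (hΛ : IsCompl (ker Λ) (annSub F N)) : IsCompl (ker Λ) (ker (mulForm Λ)) := by
  refine ⟨disjoint_iff.2 ?_, hΛ.codisjoint.mono_right (annSub_le_ker_mulForm Λ)⟩
  refine eq_bot_of_disjoint_annSub hn (fun x hx y ↦ ⟨?_, ?_⟩) (hΛ.disjoint.mono_left inf_le_left)
  · exact LinearMap.congr_fun hx.2 y
  · refine LinearMap.ext fun z ↦ ?_
    simpa [mul_assoc] using LinearMap.congr_fun hx.2 (y * z)

def kerForm (Λ : Module.Dual F N) : LinearMap.BilinForm F (ker Λ) := (mulForm Λ).restrict (ker Λ)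

@[simp]
theorem kerForm_apply (Λ : Module.Dual F N) (x y : ker Λ) : kerForm Λ x y = Λ (x * y) := rfl

theorem kerForm_isSymm (Λ : Module.Dual F N) : (kerForm Λ).IsSymm :=
  ⟨fun x y ↦ by simp [mul_comm]⟩

theorem kerForm_nondegenerate {n : ℕ} (hn : pw F N (n + 1) = ⊥)
    {Λ : Module.Dual F N} (hΛ : IsCompl (ker Λ) (annSub F N)) : (kerForm Λ).Nondegenerate :=
  (LinearMap.BilinForm.isSymm_iff.1 (mulForm_isSymm Λ)).nondegenerate_restrict_of_isCompl_ker
    (isCompl_ker_ker_mulForm hn hΛ)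

def kerSqAnn (Λ : Module.Dual F N) : Submodule F (ker Λ) :=
  (pw F N 2 ⊔ annSub F N).comap (ker Λ).subtype

theorem kerSqAnn_le_orthogonal (h4 : pw F N 4 = ⊥) (Λ : Module.Dual F N) :
    kerSqAnn Λ ≤ (kerForm Λ).orthogonal (kerSqAnn Λ) := fun u hu v hv ↦ by
  rw [kerForm_apply, mul_eq_zero_of_mem_sup (x := (v : N)) (y := u) h4 hv hu, map_zero]

variable (h4 : pw F N 4 = ⊥) {Λ : Module.Dual F N} (hΛ : IsCompl (ker Λ) (annSub F N))
include h4 hΛ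

theorem mul_eq_zero_of_mem_orthogonal_kerSqAnn {x : ker Λ}
    (hx : x ∈ (kerForm Λ).orthogonal (kerSqAnn Λ)) {u : N} (hu : u ∈ pw F N 2 ⊔ annSub F N) :
    (x : N) * u = 0 := by
  obtain ⟨k, hk, a, ha, rfl⟩ := mem_sup.1 (hΛ.sup_eq_top ▸ mem_top : u ∈ ker Λ ⊔ annSub F N)
  have hkQ : k ∈ pw F N 2 ⊔ annSub F N := by simpa using sub_mem hu (mem_sup_right ha)
  rw [mul_add, mul_comm _ a, ha, add_zero]
  refine disjoint_def.1 hΛ.disjoint _ ?_ (mul_mem_annSub_of_mem_sup h4 _ hkQ)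
  rw [mem_ker, mul_comm]
  exact hx ⟨k, hk⟩ hkQ

theorem mul_mem_annSub_of_mem_orthogonal_kerSqAnn {x : ker Λ}
    (hx : x ∈ (kerForm Λ).orthogonal (kerSqAnn Λ)) (y : N) : (x : N) * y ∈ annSub F N :=
  fun z ↦ by
    rw [mul_assoc]
    exact mul_eq_zero_of_mem_orthogonal_kerSqAnn h4 hΛ hx
      (mem_sup_left (mul_mem_pw_s16 (k := 0) y mem_top))

theorem mul_mem_iSup_fiber_of_isotropic {V X : Submodule F (ker Λ)}
    (hVV : V ≤ (kerForm Λ).orthogonal V)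
    (hVX : V ≤ (kerForm Λ).orthogonal X) (hXQ : X ≤ (kerForm Λ).orthogonal (kerSqAnn Λ)) :
    let H := ![V.map (ker Λ).subtype, X.map (ker Λ).subtype, (kerSqAnn Λ).map (ker Λ).subtype,
      annSub F N]
    let deg := ![2, 3, 4, 6]
    ∀ a b, ∀ x ∈ H a, ∀ y ∈ H b, x * y ∈ ⨆ c, ⨆ (_ : deg c = deg a + deg b), H c := by
  intro H deg a b x hx y hy
  have hA {z : N} (hz : z ∈ annSub F N) (hΛz : Λ z = 0) : z = 0 :=
    disjoint_def.1 hΛ.disjoint z hΛz hz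
  have hQ {u : N} (hu : u ∈ H 2) : u ∈ pw F N 2 ⊔ annSub F N := by
    simp only [H, Matrix.cons_val, kerSqAnn, map_comap_subtype] at hu
    exact hu.2
  have mulVV {z w : N} (hz : z ∈ H 0) (hw : w ∈ H 0) : z * w ∈ H 2 := by
    obtain ⟨v, hv, rfl⟩ := hz
    obtain ⟨v', hv', rfl⟩ := hw
    simp only [H, Matrix.cons_val, kerSqAnn, map_comap_subtype]
    exact ⟨hVV hv' v hv, mem_sup_left (mul_mem_pw_s16 (k := 0) _ mem_top)⟩
  have mulXV {z w : N} (hz : z ∈ H 1) (hw : w ∈ H 0) : z * w = 0 := by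
    obtain ⟨ξ, hξ, rfl⟩ := hz
    obtain ⟨v, hv, rfl⟩ := hw
    exact hA (mul_mem_annSub_of_mem_orthogonal_kerSqAnn h4 hΛ (hXQ hξ) _) (hVX hv ξ hξ)
  have mulX {z : N} (hz : z ∈ H 1) (w : N) : z * w ∈ annSub F N := by
    obtain ⟨ξ, hξ, rfl⟩ := hz
    exact mul_mem_annSub_of_mem_orthogonal_kerSqAnn h4 hΛ (hXQ hξ) w
  have mulXQ {z u : N} (hz : z ∈ H 1) (hu : u ∈ H 2) : z * u = 0 := by
    obtain ⟨ξ, hξ, rfl⟩ := hz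
    exact mul_eq_zero_of_mem_orthogonal_kerSqAnn h4 hΛ (hXQ hξ) (hQ hu)
  have zero (h : x * y = 0) : x * y ∈ ⨆ c, ⨆ (_ : deg c = deg a + deg b), H c :=
    h ▸ zero_mem _
  have piece (c) (hc : deg c = deg a + deg b) (h : x * y ∈ H c) :
      x * y ∈ ⨆ c, ⨆ (_ : deg c = deg a + deg b), H c :=
    mem_iSup_of_mem c (mem_iSup_of_mem hc h)
  fin_cases a <;> fin_cases b
  · exact piece 2 rfl (mulVV hx hy)
  · exact zero (mul_comm x y ▸ mulXV hy hx)
  · exact piece 3 rfl (mul_mem_annSub_of_mem_sup h4 x (hQ hy))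
  · exact zero (mul_comm x y ▸ hy x)
  · exact zero (mulXV hx hy)
  · exact piece 3 rfl (mulX hx y)
  · exact zero (mulXQ hx hy)
  · exact zero (mul_comm x y ▸ hy x)
  · exact piece 3 rfl (mul_comm x y ▸ mul_mem_annSub_of_mem_sup h4 y (hQ hx))
  · exact zero (mul_comm x y ▸ mulXQ hy hx)
  · exact zero (mul_eq_zero_of_mem_sup h4 (hQ hx) (hQ hy))
  · exact zero (mul_comm x y ▸ hy x)
  all_goals exact zero (hx y)

end Frobenius

/-- Every admissible algebra `N` (finite-dimensional commutative nilpotent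
over a field of characteristic zero with `dim Ann(N) = 1`) of nil-index ≤ 3 (`N⁴ = 0`)
admits a grading: a direct sum vector space decomposition `N = ⊕_{k∈ℤ⁺} N_k` with
`N_j · N_k ⊆ N_{j+k}` for all `j, k > 0`. -/
theorem stmt16 {F N : Type*} [Field F] [CharZero F] [NonUnitalCommRing N] [Module F N]
    [SMulCommClass F N N] [IsScalarTower F N N] [FiniteDimensional F N]
    (hAnn : Module.finrank F (annSub F N) = 1)
    (h4 : pw F N 4 = ⊥) :
    ∃ G : ℕ → Submodule F N,
      G 0 = ⊥ ∧ iSup G = ⊤ ∧ iSupIndep G ∧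
      ∀ j k : ℕ, 0 < j → 0 < k → ∀ x ∈ G j, ∀ y ∈ G k, x * y ∈ G (j + k) := by
  obtain ⟨Λ, hΛ⟩ := exists_isCompl_ker_of_finrank_eq_one hAnn
  obtain ⟨V, X, hVV, hVX, hXQ, hXQ', hVXQ, htop⟩ :=
    (kerForm_isSymm Λ).exists_isotropic_decomposition (kerForm_nondegenerate (n := 3) h4 hΛ)
      (kerSqAnn_le_orthogonal h4 Λ)
  exact exists_grading_of_iSupIndep _ ![2, 3, 4, 6] (by decide)
    (iSupIndep_map_subtype_of_isCompl hΛ hXQ' hVXQ) (iSup_map_subtype_of_isCompl hΛ htop)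
    (mul_mem_iSup_fiber_of_isotropic h4 hΛ hVV hVX hXQ)
end
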